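/- A finite simple graph G is a disconnected minimal polar obstruction if and only if G is isomorphic to the disjoint union P_3 + H, where H is a minimal monopolar obstruction that is not a minimal polar obstruction. -/

import Mathlib

/-!
If no edges join `s` and `t`, a polar partition of `s ∪ t` whose multipartite part `A` meets
both sides has `A` independent (a vertex of `A` on one side is nonadjacent to everything on the
other, so all of `A` lies in a single part); otherwise `A` lies on one side and the other side is
a cluster. Hence `s ∪ t` is polar iff both sides are monopolar, or one is a cluster and the other
polar.

In a disconnected minimal polar obstruction `G`, split off a union of components `D` so that
`Dᶜ` is not monopolar. Then `D` is not a cluster, so it contains an induced `P₃`, and already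
`P₃ ∪ Dᶜ` is not polar; by minimality `D` is that `P₃`, and minimality of `G` turns into
minimal non-monopolarity of `G[Dᶜ]`. Conversely, the same criterion shows that `P₃ + H` is a
minimal polar obstruction whenever `H` is a polar minimal monopolar obstruction.
-/

open SimpleGraph

universe u v

/-! ### Basic predicates -/

/-- `B` induces a disjoint union of complete graphs in `G` (i.e. `G[B]` is a cluster). -/
def IsClusterSet {V : Type*} (G : SimpleGraph V) (B : Set V) : Prop :=
  ∀ ⦃u w x : V⦄, u ∈ B → w ∈ B → x ∈ B → G.Adj u w → G.Adj w x → u ≠ x → G.Adj u x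

/-- `A` induces a complete multipartite graph in `G`
(the complement of `G[A]` is a disjoint union of cliques). -/
def IsCompleteMultipartiteSet {V : Type*} (G : SimpleGraph V) (A : Set V) : Prop :=
  ∀ ⦃u w x : V⦄, u ∈ A → w ∈ A → x ∈ A → u ≠ w → w ≠ x → u ≠ x →
    ¬ G.Adj u w → ¬ G.Adj w x → ¬ G.Adj u x

/-- `A` is an independent set of `G`. -/
def IsIndepSetG {V : Type*} (G : SimpleGraph V) (A : Set V) : Prop :=
  ∀ ⦃u w : V⦄, u ∈ A → w ∈ A → ¬ G.Adj u w

/-- `G[B]` is a disjoint union of at most `k` complete graphs. -/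
def IsClusterSetLE {V : Type*} (G : SimpleGraph V) (k : ℕ) (B : Set V) : Prop :=
  ∃ g : B → Fin k, ∀ u w : B, u ≠ w → (G.Adj u w ↔ g u = g w)

/-- `G[A]` is a complete multipartite graph with at most `s` parts. -/
def IsCompleteMultipartiteSetLE {V : Type*} (G : SimpleGraph V) (s : ℕ) (A : Set V) : Prop :=
  ∃ f : A → Fin s, ∀ u w : A, G.Adj u w ↔ f u ≠ f w

/-! ### Polarity properties -/

/-- `G` is unipolar: a partition `(A, Aᶜ)` with `A` a clique and `G[Aᶜ]` a cluster. -/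
def Unipolar {V : Type*} (G : SimpleGraph V) : Prop :=
  ∃ A : Set V, G.IsClique A ∧ IsClusterSet G Aᶜ

/-- `G` is monopolar ((1,∞)-polar). -/
def Monopolar {V : Type*} (G : SimpleGraph V) : Prop :=
  ∃ A : Set V, IsIndepSetG G A ∧ IsClusterSet G Aᶜ

/-- `G` is polar ((∞,∞)-polar). -/
def Polar {V : Type*} (G : SimpleGraph V) : Prop :=
  ∃ A : Set V, IsCompleteMultipartiteSet G A ∧ IsClusterSet G Aᶜ

/-- `G` is (s,1)-polar. -/
def SOnePolar {V : Type*} (s : ℕ) (G : SimpleGraph V) : Prop :=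
  ∃ A : Set V, IsCompleteMultipartiteSetLE G s A ∧ G.IsClique Aᶜ

/-- `G` is (∞,1)-polar. -/
def InfOnePolar {V : Type*} (G : SimpleGraph V) : Prop :=
  ∃ A : Set V, IsCompleteMultipartiteSet G A ∧ G.IsClique Aᶜ

/-- `G` is (1,k)-polar. -/
def OneKPolar {V : Type*} (k : ℕ) (G : SimpleGraph V) : Prop :=
  ∃ A : Set V, IsIndepSetG G A ∧ IsClusterSetLE G k Aᶜ

/-! ### Minimal obstructions -/

def MinUnipolarObstruction {V : Type*} (G : SimpleGraph V) : Prop :=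
  ¬ Unipolar G ∧ ∀ s : Set V, s ≠ Set.univ → Unipolar (G.induce s)

def MinMonopolarObstruction {V : Type*} (G : SimpleGraph V) : Prop :=
  ¬ Monopolar G ∧ ∀ s : Set V, s ≠ Set.univ → Monopolar (G.induce s)

def MinPolarObstruction {V : Type*} (G : SimpleGraph V) : Prop :=
  ¬ Polar G ∧ ∀ s : Set V, s ≠ Set.univ → Polar (G.induce s)

def MinSOnePolarObstruction {V : Type*} (s : ℕ) (G : SimpleGraph V) : Prop :=
  ¬ SOnePolar s G ∧ ∀ t : Set V, t ≠ Set.univ → SOnePolar s (G.induce t)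

def MinInfOnePolarObstruction {V : Type*} (G : SimpleGraph V) : Prop :=
  ¬ InfOnePolar G ∧ ∀ t : Set V, t ≠ Set.univ → InfOnePolar (G.induce t)

def MinOneKPolarObstruction {V : Type*} (k : ℕ) (G : SimpleGraph V) : Prop :=
  ¬ OneKPolar k G ∧ ∀ t : Set V, t ≠ Set.univ → OneKPolar k (G.induce t)

/-! ### Graph constructions -/

/-- The join of two graphs: all edges added between the summands. -/
def joinG {α β : Type*} (G : SimpleGraph α) (H : SimpleGraph β) : SimpleGraph (α ⊕ β) where
  Adj x y := (G ⊕g H).Adj x y ∨ (x.isLeft ∧ y.isRight) ∨ (x.isRight ∧ y.isLeft)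
  symm := ⟨fun x y h => by
    rcases h with h | ⟨h1, h2⟩ | ⟨h1, h2⟩
    · exact Or.inl (h.symm)
    · exact Or.inr (Or.inr ⟨h2, h1⟩)
    · exact Or.inr (Or.inl ⟨h2, h1⟩)⟩
  loopless := ⟨fun x h => by
    rcases h with h | ⟨h1, h2⟩ | ⟨h1, h2⟩
    · exact (G ⊕g H).loopless.irrefl x h
    · cases x <;> simp_all
    · cases x <;> simp_all⟩

/-- `K_n`, the complete graph on `n` vertices. -/
def KG (n : ℕ) : SimpleGraph (Fin n) := ⊤

/-- `n K_1`, the edgeless graph on `n` vertices. -/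
def EG (n : ℕ) : SimpleGraph (Fin n) := ⊥

/-- The banner graph `P`: a four-cycle `0 1 2 3` with a pendant vertex `4` adjacent to `0`. -/
def banner : SimpleGraph (Fin 5) :=
  SimpleGraph.fromEdgeSet {s(0, 1), s(1, 2), s(2, 3), s(3, 0), s(0, 4)}

/-- The chair (fork) graph `F`: a path `0 1 2 3` with an extra vertex `4` adjacent to `1`. -/
def chair : SimpleGraph (Fin 5) :=
  SimpleGraph.fromEdgeSet {s(0, 1), s(1, 2), s(2, 3), s(1, 4)}

/-- `2P_3`. -/
def twoP3 : SimpleGraph (Fin 3 ⊕ Fin 3) := pathGraph 3 ⊕g pathGraph 3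

/-- `K_{2,3}`. -/
def K23 : SimpleGraph (Fin 2 ⊕ Fin 3) := completeBipartiteGraph (Fin 2) (Fin 3)

/-- The seven graphs `E1, E2, E3, E7, E10, E11, E12`. -/
def E1 : SimpleGraph (Fin 1 ⊕ (Fin 2 ⊕ Fin 2)) := KG 1 ⊕g (KG 2 ⊕g KG 2)
def E2 : SimpleGraph (Fin 3 ⊕ Fin 3) := pathGraph 3 ⊕g pathGraph 3
def E3 : SimpleGraph (Fin 4 ⊕ Fin 2) := cycleGraph 4 ⊕g EG 2
def E7 : SimpleGraph (Fin 1 ⊕ (Fin 3 ⊕ Fin 2)) := KG 1 ⊕g (pathGraph 3 ⊕g KG 2)ᶜ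
def E10 : SimpleGraph (Fin 1 ⊕ Fin 5) := KG 1 ⊕g cycleGraph 5
def E11 : SimpleGraph (Fin 1 ⊕ Fin 5) := KG 1 ⊕g banner
def E12 : SimpleGraph (Fin 1 ⊕ Fin 5) := KG 1 ⊕g (pathGraph 5)ᶜ

/-! ### P4 structure -/

/-- `W` induces a path on four vertices in `G`. -/
def InducesP4 {V : Type*} (G : SimpleGraph V) (W : Set V) : Prop :=
  Nonempty (G.induce W ≃g pathGraph 4)

/-- A graph is a cograph if it has no induced `P_4`. -/
def Cograph {V : Type*} (G : SimpleGraph V) : Prop :=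
  ∀ W : Set V, ¬ InducesP4 G W

/-- `G` is `P_4`-sparse: any five vertices induce at most one `P_4`. -/
def P4Sparse {V : Type*} (G : SimpleGraph V) : Prop :=
  ∀ s : Set V, s.ncard = 5 → ∀ W₁ W₂ : Set V, W₁ ⊆ s → W₂ ⊆ s →
    InducesP4 G W₁ → InducesP4 G W₂ → W₁ = W₂

/-- `G` is `P_4`-extendible. -/
def P4Extendible {V : Type*} (G : SimpleGraph V) : Prop :=
  ∀ W : Set V, InducesP4 G W →
    ∀ v₁ v₂ : V, v₁ ∉ W → v₂ ∉ W →
      (∃ W₁ : Set V, InducesP4 G W₁ ∧ v₁ ∈ W₁ ∧ (W₁ ∩ W).Nonempty) →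
      (∃ W₂ : Set V, InducesP4 G W₂ ∧ v₂ ∈ W₂ ∧ (W₂ ∩ W).Nonempty) → v₁ = v₂

/-! ### Spiders -/

/-- `(S, K, R)` is a spider partition of `G`. -/
def IsSpiderPartition {V : Type*} (G : SimpleGraph V) (S K R : Set V) : Prop :=
  S ∪ K ∪ R = Set.univ ∧ Disjoint S K ∧ Disjoint S R ∧ Disjoint K R ∧
  S.ncard = K.ncard ∧ 2 ≤ K.ncard ∧
  G.IsClique K ∧ IsIndepSetG G S ∧
  (∃ f : S → K, Function.Bijective f ∧
    ((∀ s : S, ∀ k : K, G.Adj s k ↔ (f s : V) = k) ∨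
     (∀ s : S, ∀ k : K, G.Adj s k ↔ (f s : V) ≠ k))) ∧
  (∀ r ∈ R, ∀ k ∈ K, G.Adj r k) ∧
  (∀ r ∈ R, ∀ s ∈ S, ¬ G.Adj r s)

/-- `G` is a `B`-spider with partition `(S, K, R)`, where `B` is a fixed base graph with
midpoint set `M` and endpoint set `E`: `G` is obtained from a copy of `B` (whose midpoints
form `K` and whose endpoints form `S`) by adding the set `R` of vertices, each adjacent to
all midpoints and to no endpoint. -/
def IsBaseSpider {n : ℕ} {V : Type*} (B : SimpleGraph (Fin n)) (M E : Set (Fin n))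
    (G : SimpleGraph V) (S K R : Set V) : Prop :=
  ∃ f : Fin n → V, Function.Injective f ∧
    (∀ i j : Fin n, G.Adj (f i) (f j) ↔ B.Adj i j) ∧
    K = f '' M ∧ S = f '' E ∧ R = (Set.range f)ᶜ ∧
    (∀ r ∈ R, ∀ x ∈ K, G.Adj r x) ∧
    (∀ r ∈ R, ∀ x ∈ S, ¬ G.Adj r x)

section Anticomplete

variable {V W : Type*}

namespace SimpleGraph

def IsAnticompleteBetween (G : SimpleGraph V) (s t : Set V) : Prop :=
  ∀ ⦃v₁⦄, v₁ ∈ s → ∀ ⦃v₂⦄, v₂ ∈ t → ¬ G.Adj v₁ v₂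

variable {G : SimpleGraph V} {s s' t t' : Set V}

theorem IsAnticompleteBetween.symm (h : G.IsAnticompleteBetween s t) :
    G.IsAnticompleteBetween t s :=
  fun _ h₁ _ h₂ hadj => h h₂ h₁ hadj.symm

theorem IsAnticompleteBetween.mono (h : G.IsAnticompleteBetween s t) (hs : s' ⊆ s)
    (ht : t' ⊆ t) : G.IsAnticompleteBetween s' t' :=
  fun _ h₁ _ h₂ => h (hs h₁) (ht h₂)

theorem exists_isAnticompleteBetween_compl_of_not_preconnected (h : ¬ G.Preconnected) :
    ∃ D : Set V, D.Nonempty ∧ Dᶜ.Nonempty ∧ G.IsAnticompleteBetween D Dᶜ := by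
  simp only [Preconnected, not_forall] at h
  obtain ⟨v, w, hvw⟩ := h
  exact ⟨{u | G.Reachable v u}, ⟨v, .refl v⟩, ⟨w, hvw⟩,
    fun _ hu _ hu' hadj => hu' (Reachable.trans hu hadj.reachable)⟩

theorem isAnticompleteBetween_sum_inl_inr {H : SimpleGraph W} (s : Set V) (t : Set W) :
    (G ⊕g H).IsAnticompleteBetween (Sum.inl '' s) (Sum.inr '' t) := by
  rintro _ ⟨v, -, rfl⟩ _ ⟨w, -, rfl⟩
  exact not_adj_sum_inl_inr v w

noncomputable def Iso.sumInduceCompl (h : G.IsAnticompleteBetween s sᶜ) :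
    G.induce s ⊕g G.induce sᶜ ≃g G := by
  classical
  refine ⟨Equiv.Set.sumCompl s, ?_⟩
  rintro (a | a) (b | b)
  · simp
  · simpa using fun hab => h a.2 b.2 hab
  · simpa using fun hab => h b.2 a.2 hab.symm
  · simp

end SimpleGraph

end Anticomplete

section PolarOn

open Set

variable {V W : Type*} {G : SimpleGraph V} {H : SimpleGraph W} {s t A : Set V}

def MonopolarOn (G : SimpleGraph V) (s : Set V) : Prop :=
  ∃ A ⊆ s, IsIndepSetG G A ∧ IsClusterSet G (s \ A)

def PolarOn (G : SimpleGraph V) (s : Set V) : Prop :=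
  ∃ A ⊆ s, IsCompleteMultipartiteSet G A ∧ IsClusterSet G (s \ A)

theorem IsClusterSet.mono (h : IsClusterSet G s) (hts : t ⊆ s) : IsClusterSet G t :=
  fun _ _ _ hu hw hx => h (hts hu) (hts hw) (hts hx)

theorem IsIndepSetG.mono (h : IsIndepSetG G s) (hts : t ⊆ s) : IsIndepSetG G t :=
  fun _ _ hu hw => h (hts hu) (hts hw)

theorem IsCompleteMultipartiteSet.mono (h : IsCompleteMultipartiteSet G s) (hts : t ⊆ s) :
    IsCompleteMultipartiteSet G t :=
  fun _ _ _ hu hw hx => h (hts hu) (hts hw) (hts hx)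

theorem IsIndepSetG.isCompleteMultipartiteSet (h : IsIndepSetG G A) :
    IsCompleteMultipartiteSet G A :=
  fun _ _ _ hu _ hx _ _ _ _ _ => h hu hx

theorem IsClusterSet.monopolarOn (h : IsClusterSet G s) : MonopolarOn G s :=
  ⟨∅, empty_subset s, fun _ _ h => h.elim, by rwa [sdiff_empty]⟩

theorem MonopolarOn.polarOn (h : MonopolarOn G s) : PolarOn G s :=
  let ⟨A, hAs, hA, hc⟩ := h
  ⟨A, hAs, hA.isCompleteMultipartiteSet, hc⟩

theorem Monopolar.polar (h : Monopolar G) : Polar G :=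
  let ⟨A, hA, hc⟩ := h
  ⟨A, hA.isCompleteMultipartiteSet, hc⟩

theorem MonopolarOn.mono (h : MonopolarOn G s) (hts : t ⊆ s) : MonopolarOn G t :=
  let ⟨A, _, hA, hc⟩ := h
  ⟨A ∩ t, inter_subset_right, hA.mono inter_subset_left,
    hc.mono (by rw [sdiff_inter_self_eq_sdiff]; exact sdiff_subset_sdiff_left hts)⟩

theorem PolarOn.mono (h : PolarOn G s) (hts : t ⊆ s) : PolarOn G t :=
  let ⟨A, _, hA, hc⟩ := h
  ⟨A ∩ t, inter_subset_right, hA.mono inter_subset_left,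
    hc.mono (by rw [sdiff_inter_self_eq_sdiff]; exact sdiff_subset_sdiff_left hts)⟩

theorem isClusterSet_image (f : H ↪g G) (s : Set W) :
    IsClusterSet G (f '' s) ↔ IsClusterSet H s := by
  constructor
  · intro h u w x hu hw hx huw hwx hux
    exact f.map_adj_iff.1 <| h (mem_image_of_mem f hu) (mem_image_of_mem f hw)
      (mem_image_of_mem f hx) (f.map_adj_iff.2 huw) (f.map_adj_iff.2 hwx) (f.injective.ne hux)
  · rintro h _ _ _ ⟨u, hu, rfl⟩ ⟨w, hw, rfl⟩ ⟨x, hx, rfl⟩ huw hwx hux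
    exact f.map_adj_iff.2 <| h hu hw hx (f.map_adj_iff.1 huw) (f.map_adj_iff.1 hwx)
      (ne_of_apply_ne f hux)

theorem isIndepSetG_image (f : H ↪g G) (s : Set W) :
    IsIndepSetG G (f '' s) ↔ IsIndepSetG H s := by
  constructor
  · intro h u w hu hw huw
    exact h (mem_image_of_mem f hu) (mem_image_of_mem f hw) (f.map_adj_iff.2 huw)
  · rintro h _ _ ⟨u, hu, rfl⟩ ⟨w, hw, rfl⟩ huw
    exact h hu hw (f.map_adj_iff.1 huw)

theorem isCompleteMultipartiteSet_image (f : H ↪g G) (s : Set W) :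
    IsCompleteMultipartiteSet G (f '' s) ↔ IsCompleteMultipartiteSet H s := by
  constructor
  · intro h u w x hu hw hx huw hwx hux hnuw hnwx
    simpa using h (mem_image_of_mem f hu) (mem_image_of_mem f hw) (mem_image_of_mem f hx)
      (f.injective.ne huw) (f.injective.ne hwx) (f.injective.ne hux) (by simpa) (by simpa)
  · rintro h _ _ _ ⟨u, hu, rfl⟩ ⟨w, hw, rfl⟩ ⟨x, hx, rfl⟩ huw hwx hux hnuw hnwx
    simpa using h hu hw hx (ne_of_apply_ne f huw) (ne_of_apply_ne f hwx) (ne_of_apply_ne f hux)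
      (by simpa using hnuw) (by simpa using hnwx)

theorem monopolarOn_image (f : H ↪g G) (s : Set W) :
    MonopolarOn G (f '' s) ↔ MonopolarOn H s := by
  simp only [MonopolarOn, exists_subset_image_iff, ← image_sdiff f.injective, isIndepSetG_image,
    isClusterSet_image]

theorem polarOn_image (f : H ↪g G) (s : Set W) :
    PolarOn G (f '' s) ↔ PolarOn H s := by
  simp only [PolarOn, exists_subset_image_iff, ← image_sdiff f.injective,
    isCompleteMultipartiteSet_image, isClusterSet_image]

theorem monopolar_iff_monopolarOn_univ : Monopolar G ↔ MonopolarOn G univ := by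
  simp [Monopolar, MonopolarOn, compl_eq_univ_sdiff]

theorem polar_iff_polarOn_univ : Polar G ↔ PolarOn G univ := by
  simp [Polar, PolarOn, compl_eq_univ_sdiff]

theorem SimpleGraph.Embedding.range_induce (s : Set V) :
    range (Embedding.induce s : G.induce s ↪g G) = s :=
  Subtype.range_coe

theorem monopolar_induce_iff : Monopolar (G.induce s) ↔ MonopolarOn G s := by
  rw [monopolar_iff_monopolarOn_univ, ← monopolarOn_image (Embedding.induce s), image_univ,
    Embedding.range_induce]

theorem polar_induce_iff : Polar (G.induce s) ↔ PolarOn G s := by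
  rw [polar_iff_polarOn_univ, ← polarOn_image (Embedding.induce s), image_univ,
    Embedding.range_induce]

end PolarOn

section Union

open Set

variable {V : Type*} {G : SimpleGraph V} {s t A : Set V}

theorem IsIndepSetG.union (hst : G.IsAnticompleteBetween s t) (hs : IsIndepSetG G s)
    (ht : IsIndepSetG G t) : IsIndepSetG G (s ∪ t) := by
  rintro u w (hu | hu) (hw | hw)
  exacts [hs hu hw, hst hu hw, fun h => hst hw hu h.symm, ht hu hw]

theorem IsClusterSet.union (hst : G.IsAnticompleteBetween s t) (hs : IsClusterSet G s)
    (ht : IsClusterSet G t) : IsClusterSet G (s ∪ t) := by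
  rintro u w x (hu | hu) (hw | hw) (hx | hx) huw hwx hux
  · exact hs hu hw hx huw hwx hux
  · exact absurd hwx (hst hw hx)
  · exact absurd huw (hst hu hw)
  · exact absurd huw (hst hu hw)
  · exact absurd huw.symm (hst hw hu)
  · exact absurd huw.symm (hst hw hu)
  · exact absurd hwx.symm (hst hx hw)
  · exact ht hu hw hx huw hwx hux

theorem MonopolarOn.union (hst : G.IsAnticompleteBetween s t) (hs : MonopolarOn G s)
    (ht : MonopolarOn G t) : MonopolarOn G (s ∪ t) := by
  obtain ⟨A, hAs, hA, hsA⟩ := hs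
  obtain ⟨B, hBt, hB, htB⟩ := ht
  refine ⟨A ∪ B, union_subset_union hAs hBt, hA.union (hst.mono hAs hBt) hB, ?_⟩
  refine (hsA.union (hst.mono sdiff_subset sdiff_subset) htB).mono ?_
  rw [union_sdiff_distrib]
  exact union_subset_union (sdiff_subset_sdiff_right subset_union_left)
    (sdiff_subset_sdiff_right subset_union_right)

theorem PolarOn.union_of_isClusterSet_left (hst : G.IsAnticompleteBetween s t)
    (hs : IsClusterSet G s) (ht : PolarOn G t) : PolarOn G (s ∪ t) := by
  obtain ⟨A, hAt, hA, htA⟩ := ht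
  refine ⟨A, hAt.trans subset_union_right, hA, ?_⟩
  refine (hs.union (hst.mono subset_rfl sdiff_subset) htA).mono ?_
  rw [union_sdiff_distrib]
  exact union_subset_union_left _ sdiff_subset

theorem IsCompleteMultipartiteSet.not_adj_of_isAnticompleteBetween
    (hA : IsCompleteMultipartiteSet G A) (hst : G.IsAnticompleteBetween s t) {a b c : V}
    (ha : a ∈ A ∩ s) (hb : b ∈ A ∩ s) (hc : c ∈ A ∩ t) : ¬ G.Adj a b := by
  -- `c` is nonadjacent to `a` and `b`, so all three lie in one part.
  intro hab
  have hac : ¬ G.Adj a c := hst ha.2 hc.2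
  have hbc : ¬ G.Adj b c := hst hb.2 hc.2
  refine hA ha.1 hc.1 hb.1 ?_ ?_ hab.ne hac (fun h => hbc h.symm) hab
  · rintro rfl; exact hbc hab.symm
  · rintro rfl; exact hac hab

theorem IsCompleteMultipartiteSet.isIndepSetG_of_isAnticompleteBetween
    (hA : IsCompleteMultipartiteSet G A) (hst : G.IsAnticompleteBetween s t) (hAst : A ⊆ s ∪ t)
    (hAs : (A ∩ s).Nonempty) (hAt : (A ∩ t).Nonempty) : IsIndepSetG G A := by
  obtain ⟨c, hc⟩ := hAt
  obtain ⟨c', hc'⟩ := hAs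
  intro a b ha hb
  rcases hAst ha with has | hat <;> rcases hAst hb with hbs | hbt
  · exact hA.not_adj_of_isAnticompleteBetween hst ⟨ha, has⟩ ⟨hb, hbs⟩ hc
  · exact hst has hbt
  · exact fun h => hst hbs hat h.symm
  · exact hA.not_adj_of_isAnticompleteBetween hst.symm ⟨ha, hat⟩ ⟨hb, hbt⟩ hc'

theorem polarOn_union_iff (hst : G.IsAnticompleteBetween s t) :
    PolarOn G (s ∪ t) ↔ (MonopolarOn G s ∧ MonopolarOn G t) ∨
      (IsClusterSet G s ∧ PolarOn G t) ∨ (PolarOn G s ∧ IsClusterSet G t) := by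
  constructor
  · intro h
    have ⟨A, hAst, hA, hrest⟩ := h
    have hcluster {u : Set V} (hu : u ⊆ s ∪ t) (hAu : ¬ (A ∩ u).Nonempty) : IsClusterSet G u :=
      hrest.mono fun z hz => ⟨hu hz, fun hzA => hAu ⟨z, hzA, hz⟩⟩
    by_cases hAs : (A ∩ s).Nonempty
    · by_cases hAt : (A ∩ t).Nonempty
      · have hmono : MonopolarOn G (s ∪ t) :=
          ⟨A, hAst, hA.isIndepSetG_of_isAnticompleteBetween hst hAst hAs hAt, hrest⟩
        exact .inl ⟨hmono.mono subset_union_left, hmono.mono subset_union_right⟩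
      · exact .inr <| .inr ⟨h.mono subset_union_left, hcluster subset_union_right hAt⟩
    · exact .inr <| .inl ⟨hcluster subset_union_left hAs, h.mono subset_union_right⟩
  · rintro (⟨hs, ht⟩ | ⟨hs, ht⟩ | ⟨hs, ht⟩)
    · exact (hs.union hst ht).polarOn
    · exact ht.union_of_isClusterSet_left hst hs
    · exact union_comm s t ▸ hs.union_of_isClusterSet_left hst.symm ht

theorem MonopolarOn.of_polarOn_union (hst : G.IsAnticompleteBetween s t)
    (hs : ¬ IsClusterSet G s) (h : PolarOn G (s ∪ t)) : MonopolarOn G t := by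
  rcases (polarOn_union_iff hst).1 h with ⟨-, ht⟩ | ⟨hs', -⟩ | ⟨-, ht⟩
  exacts [ht, absurd hs' hs, ht.monopolarOn]

end Union

section PathGraphThree

open Set

variable {V : Type*} {G : SimpleGraph V} {s : Set V}

theorem not_isClusterSet_pathGraph_three : ¬ IsClusterSet (pathGraph 3) univ := fun h =>
  absurd (h (u := 0) (w := 1) (x := 2) trivial trivial trivial (by simp [pathGraph_adj])
    (by simp [pathGraph_adj]) (by decide)) (by simp [pathGraph_adj])

theorem monopolarOn_pathGraph_three : MonopolarOn (pathGraph 3) univ := by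
  refine ⟨{1}, subset_univ _, fun u w hu hw => by simp_all, ?_⟩
  intro u w x hu hw hx huw hwx hux
  simp only [mem_sdiff, mem_univ, mem_singleton_iff, true_and] at hu hw hx
  fin_cases u <;> fin_cases w <;> simp_all [pathGraph_adj]

theorem isClusterSet_pathGraph_three_of_ne_univ {s : Set (Fin 3)} (hs : s ≠ univ) :
    IsClusterSet (pathGraph 3) s := by
  obtain ⟨i, hi⟩ := (ne_univ_iff_exists_notMem s).1 hs
  intro u w x hu hw hx huw hwx hux
  fin_cases u <;> fin_cases w <;> fin_cases x <;> fin_cases i <;> simp_all [pathGraph_adj]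

theorem exists_embedding_pathGraph_three_of_not_isClusterSet (h : ¬ IsClusterSet G s) :
    ∃ f : pathGraph 3 ↪g G, range f ⊆ s := by
  simp only [IsClusterSet, not_forall] at h
  obtain ⟨u, w, x, hu, hw, hx, huw, hwx, hux, hnux⟩ := h
  refine ⟨⟨⟨![u, w, x], ?_⟩, ?_⟩, ?_⟩
  · intro i j hij
    fin_cases i <;> fin_cases j <;>
      simp_all [huw.ne, hwx.ne, huw.ne.symm, hwx.ne.symm, Ne.symm hux]
  · intro i j
    change G.Adj (![u, w, x] i) (![u, w, x] j) ↔ _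
    fin_cases i <;> fin_cases j <;>
      simp [pathGraph_adj, huw, hwx, hnux, huw.symm, hwx.symm, G.adj_comm x u]
  · rintro _ ⟨i, rfl⟩
    fin_cases i <;> assumption

theorem not_isClusterSet_range_pathGraph_three (f : pathGraph 3 ↪g G) :
    ¬ IsClusterSet G (range f) := by
  rw [← image_univ, isClusterSet_image]
  exact not_isClusterSet_pathGraph_three

end PathGraphThree

section Obstructions

open Set

variable {V W : Type*} {G : SimpleGraph V} {H : SimpleGraph W} {D : Set V}

theorem minPolarObstruction_iff :
    MinPolarObstruction G ↔ ¬ PolarOn G univ ∧ ∀ s ≠ univ, PolarOn G s := by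
  rw [MinPolarObstruction, polar_iff_polarOn_univ]
  simp only [polar_induce_iff]

theorem MinPolarObstruction.polarOn (hG : MinPolarObstruction G) {s : Set V} (hs : s ≠ univ) :
    PolarOn G s :=
  (minPolarObstruction_iff.1 hG).2 s hs

theorem MinPolarObstruction.of_iso (e : G ≃g H) (hH : MinPolarObstruction H) :
    MinPolarObstruction G := by
  have he (s : Set V) : PolarOn G s ↔ PolarOn H (e '' s) := (polarOn_image e.toEmbedding s).symm
  have he_univ : e '' univ = univ := image_univ_of_surjective e.surjective
  rw [minPolarObstruction_iff] at hH ⊢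
  refine ⟨fun hG => hH.1 (he_univ ▸ (he univ).1 hG), fun s hs => (he s).2 (hH.2 _ ?_)⟩
  rwa [← he_univ, Ne, (image_injective.2 e.injective).eq_iff]

theorem MinMonopolarObstruction.nonempty (hH : MinMonopolarObstruction H) : Nonempty W := by
  by_contra hW
  rw [not_nonempty_iff] at hW
  exact hH.1 ⟨∅, fun u => isEmptyElim u, fun u => isEmptyElim u⟩

theorem MinPolarObstruction.exists_not_monopolarOn_compl (hG : MinPolarObstruction G)
    (hconn : ¬ G.Preconnected) :
    ∃ D : Set V, D.Nonempty ∧ G.IsAnticompleteBetween D Dᶜ ∧ ¬ MonopolarOn G Dᶜ := by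
  obtain ⟨D, hD, hDc, hsep⟩ := exists_isAnticompleteBetween_compl_of_not_preconnected hconn
  by_cases hDc_mono : MonopolarOn G Dᶜ
  · refine ⟨Dᶜ, hDc, by rw [compl_compl]; exact hsep.symm, fun hD_mono => ?_⟩
    rw [compl_compl] at hD_mono
    exact (minPolarObstruction_iff.1 hG).1
      (union_compl_self D ▸ (hD_mono.union hsep hDc_mono).polarOn)
  · exact ⟨D, hD, hsep, hDc_mono⟩

theorem MinPolarObstruction.monopolarOn_of_pathGraph_three (hG : MinPolarObstruction G)
    (f : pathGraph 3 ↪g G) {t : Set V} (hsep : G.IsAnticompleteBetween (range f) t)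
    (hne : range f ∪ t ≠ univ) : MonopolarOn G t :=
  .of_polarOn_union hsep (not_isClusterSet_range_pathGraph_three f) (hG.polarOn hne)

theorem MinPolarObstruction.exists_embedding_pathGraph_three_range_eq
    (hG : MinPolarObstruction G) (hD : D.Nonempty) (hsep : G.IsAnticompleteBetween D Dᶜ)
    (hmono : ¬ MonopolarOn G Dᶜ) : ∃ f : pathGraph 3 ↪g G, range f = D := by
  have hcluster : ¬ IsClusterSet G D := fun h => by
    refine (minPolarObstruction_iff.1 hG).1 ?_
    rw [← union_compl_self D, polarOn_union_iff hsep]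
    exact .inr <| .inl ⟨h, hG.polarOn (compl_ne_univ.2 hD)⟩
  obtain ⟨f, hf⟩ := exists_embedding_pathGraph_three_of_not_isClusterSet hcluster
  refine ⟨f, hf.antisymm fun d hd => ?_⟩
  by_contra hdf
  refine hmono (hG.monopolarOn_of_pathGraph_three f (hsep.mono hf subset_rfl) ?_)
  exact (ne_univ_iff_exists_notMem _).2 ⟨d, by simp [hdf, hd]⟩

theorem MinPolarObstruction.minMonopolarObstruction_induce_compl_range
    (hG : MinPolarObstruction G) (f : pathGraph 3 ↪g G)
    (hsep : G.IsAnticompleteBetween (range f) (range f)ᶜ) (hmono : ¬ MonopolarOn G (range f)ᶜ) :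
    MinMonopolarObstruction (G.induce (range f)ᶜ) := by
  refine ⟨by rwa [monopolar_induce_iff], fun t ht => ?_⟩
  obtain ⟨z, hz⟩ := (ne_univ_iff_exists_notMem t).1 ht
  rw [monopolar_induce_iff, ← monopolarOn_image (Embedding.induce _)]
  refine hG.monopolarOn_of_pathGraph_three f (hsep.mono subset_rfl ?_) ?_
  · exact image_subset_iff.2 fun y _ => y.2
  · refine (ne_univ_iff_exists_notMem _).2 ⟨z, ?_⟩
    simpa [hz] using (mem_compl_iff _ _).1 z.2

theorem MinPolarObstruction.exists_iso_pathGraph_three_sum (hG : MinPolarObstruction G)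
    (hD : D.Nonempty) (hsep : G.IsAnticompleteBetween D Dᶜ) (hmono : ¬ MonopolarOn G Dᶜ) :
    MinMonopolarObstruction (G.induce Dᶜ) ∧ Polar (G.induce Dᶜ) ∧
      Nonempty (G ≃g pathGraph 3 ⊕g G.induce Dᶜ) := by
  obtain ⟨f, rfl⟩ := hG.exists_embedding_pathGraph_three_range_eq hD hsep hmono
  refine ⟨hG.minMonopolarObstruction_induce_compl_range f hsep hmono,
    hG.2 _ (compl_ne_univ.2 hD), ⟨?_⟩⟩
  exact (Iso.sumInduceCompl hsep).symm.trans (Iso.sumCongr f.isoInduceRange.symm .refl)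

theorem MinMonopolarObstruction.minPolarObstruction_pathGraph_three_sum
    (hH : MinMonopolarObstruction H) (hpolar : Polar H) :
    MinPolarObstruction (pathGraph 3 ⊕g H) := by
  have hsplit (S : Set (Fin 3 ⊕ W)) :
      S = Sum.inl '' (Sum.inl ⁻¹' S) ∪ Sum.inr '' (Sum.inr ⁻¹' S) :=
    (image_preimage_inl_union_image_preimage_inr S).symm
  have hsep := isAnticompleteBetween_sum_inl_inr (G := pathGraph 3) (H := H)
  rw [minPolarObstruction_iff]
  refine ⟨fun h => hH.1 ?_, fun S hS => ?_⟩
  · rw [hsplit univ, preimage_univ, preimage_univ] at h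
    have hP3 : ¬ IsClusterSet (pathGraph 3 ⊕g H) (Sum.inl '' univ) :=
      (isClusterSet_image Embedding.sumInl univ).not.2 not_isClusterSet_pathGraph_three
    exact monopolar_iff_monopolarOn_univ.2 <|
      (monopolarOn_image Embedding.sumInr univ).1 (.of_polarOn_union (hsep _ _) hP3 h)
  · rw [hsplit S, polarOn_union_iff (hsep _ _)]
    by_cases hW : Sum.inr ⁻¹' S = univ
    · have hP3 : Sum.inl ⁻¹' S ≠ univ := fun hP3 => hS (by rw [hsplit S, hP3, hW]; simp)
      refine .inr <| .inl ⟨?_, ?_⟩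
      · exact (isClusterSet_image Embedding.sumInl _).2
          (isClusterSet_pathGraph_three_of_ne_univ hP3)
      · exact hW ▸ (polarOn_image Embedding.sumInr univ).2 (polar_iff_polarOn_univ.1 hpolar)
    · refine .inl ⟨?_, ?_⟩
      · exact (monopolarOn_image Embedding.sumInl _).2
          (monopolarOn_pathGraph_three.mono (subset_univ _))
      · exact (monopolarOn_image Embedding.sumInr _).2 (monopolar_induce_iff.1 (hH.2 _ hW))

end Obstructions

/-- A finite graph `G` is a disconnected minimal polar obstruction iff `G` is
isomorphic to `P_3 + H` with `H` a minimal monopolar obstruction which is not a minimal polar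
obstruction. -/
theorem stmt_15 {V : Type} [Fintype V] (G : SimpleGraph V) :
    (¬ G.Preconnected ∧ MinPolarObstruction G) ↔
      ∃ (W : Type) (_ : Fintype W) (H : SimpleGraph W),
        MinMonopolarObstruction H ∧ ¬ MinPolarObstruction H ∧
        Nonempty (G ≃g (pathGraph 3 ⊕g H)) := by
  constructor
  · rintro ⟨hconn, hG⟩
    obtain ⟨D, hD, hsep, hmono⟩ := hG.exists_not_monopolarOn_compl hconn
    obtain ⟨hmin, hpolar, hiso⟩ := hG.exists_iso_pathGraph_three_sum hD hsep hmono
    exact ⟨_, Fintype.ofFinite _, _, hmin, fun h => h.1 hpolar, hiso⟩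
  · rintro ⟨W, _, H, hH, hHnot, ⟨e⟩⟩
    have hpolar : Polar H := by_contra fun h => hHnot ⟨h, fun s hs => (hH.2 s hs).polar⟩
    have := hH.nonempty
    exact ⟨fun h => not_preconnected_sum (e.preconnected_iff.1 h),
      .of_iso e (hH.minPolarObstruction_pathGraph_three_sum hpolar)⟩
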